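/- For any finite matroid M and any X ⊆ E(M), α_M(X) = β_{M*}(E(M) − X), where α is defined by α(X) = η(X) − Σ_{flats F ⊊ X} α(F) with η(X) = |X| − r(X), and β is defined by β(X) = r(M) − r(X) − Σ_{Y cyclic flat, X ⊊ Y} β(Y). -/

import Mathlib

open Matroid Set

variable {α : Type*}

/-- An element that lies in every base of `M`; a coloop. -/
def MCoPaper.Coloop (M : Matroid α) (e : α) : Prop := ∀ B, M.IsBase B → e ∈ B

/-- A circuit: a minimal dependent subset of the ground set. -/
def MCoPaper.Circuit (M : Matroid α) (C : Set α) : Prop :=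
  C ⊆ M.E ∧ ¬ M.Indep C ∧ ∀ x ∈ C, M.Indep (C \ {x})

/-- A cyclic flat: a flat whose restriction has no coloops. -/
def MCoPaper.CyclicFlat (M : Matroid α) (F : Set α) : Prop :=
  M.IsFlat F ∧ ∀ e ∈ F, ¬ MCoPaper.Coloop (M ↾ F) e

/-- The rank of a set: the largest cardinality of an independent subset. -/
noncomputable def MCoPaper.rk (M : Matroid α) (X : Set α) : ℕ :=
  sSup {n | ∃ I, M.Indep I ∧ I ⊆ X ∧ I.ncard = n}

open MCoPaper Classical in
/-- Mason's β function. -/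
noncomputable def MCoPaper.beta [Fintype α] (M : Matroid α) (X : Finset α) : ℤ :=
  (rk M M.E : ℤ) - rk M ↑X -
    ∑ Y ∈ (Finset.univ.filter (fun Y : Finset α => CyclicFlat M ↑Y ∧ X ⊂ Y)).attach,
      MCoPaper.beta M Y.1
  termination_by (Fintype.card α - X.card : ℕ)
  decreasing_by
    have hY := Y.2
    simp only [Finset.mem_filter, Finset.mem_univ, true_and] at hY
    have h1 : X.card < Y.1.card := Finset.card_lt_card hY.2
    have h2 : Y.1.card ≤ Fintype.card α := Y.1.card_le_univ
    omega

open MCoPaper Classical in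
/-- Mason's α function. -/
noncomputable def MCoPaper.alpha [Fintype α] (M : Matroid α) (X : Finset α) : ℤ :=
  ((X.card : ℤ) - rk M ↑X) -
    ∑ F ∈ (Finset.univ.filter (fun F : Finset α => M.IsFlat ↑F ∧ F ⊂ X)).attach,
      MCoPaper.alpha M F.1
  termination_by X.card
  decreasing_by
    have hF := F.2
    simp only [Finset.mem_filter, Finset.mem_univ, true_and] at hF
    exact Finset.card_lt_card hF.2

/-- `A : Fin n → Set α` is a presentation of `M`. -/
def MCoPaper.IsPresentation (M : Matroid α) {n : ℕ} (A : Fin n → Set α) : Prop :=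
  (∀ i, A i ⊆ M.E) ∧
    ∀ I : Set α, M.Indep I ↔ ∃ φ : α → Fin n, Set.InjOn φ I ∧ ∀ x ∈ I, x ∈ A (φ x)

/-- `M` is a transversal matroid. -/
def MCoPaper.Transversal (M : Matroid α) : Prop :=
  ∃ (n : ℕ) (A : Fin n → Set α), MCoPaper.IsPresentation M A

/-- `B` is a fundamental basis of `M`. -/
def MCoPaper.FundBasis (M : Matroid α) (B : Set α) : Prop :=
  M.IsBase B ∧ ∀ F, MCoPaper.CyclicFlat M F → F ⊆ M.closure (B ∩ F)

/-- `M` is a fundamental transversal matroid. -/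
def MCoPaper.FundTransversal (M : Matroid α) : Prop :=
  ∃ B, MCoPaper.FundBasis M B

/-!
A flat `F` that is not cyclic has `α(F) = 0`, by induction: its cyclic core `C` (delete the
coloops of `M ↾ F`) is the largest cyclic flat inside `F` and has the same nullity, so the
recursion for `α(F)` telescopes to `η(F) - η(C) = 0`. Hence `α(X) = η(X) - ∑ α(Z)` over the
cyclic flats `Z ⊊ X`. Complementation in `E` is an inclusion-reversing bijection from the cyclic
flats of `M` to those of `M✶`, and `r✶(E) - r✶(E \ X) = η(X)`, so `α` and `β_{M✶}(E \ ·)` obey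
the same recursion.
-/

namespace MCoPaper

lemma sdiff_lt_sdiff_iff {β : Type*} [GeneralizedBooleanAlgebra β] {x y z : β} (hx : x ≤ z)
    (hy : y ≤ z) : z \ x < z \ y ↔ y < x := by
  simp only [lt_iff_le_not_ge, sdiff_le_sdiff_iff_le hx hy, sdiff_le_sdiff_iff_le hy hx]

variable {M : Matroid α} {X F Z : Set α} {e : α}

section Rank

lemma cast_rk_eq_eRk (hX : M.IsRkFinite X) : (rk M X : ℕ∞) = M.eRk X := by
  obtain ⟨I, hI, hIfin⟩ := hX.exists_finite_isBasis'
  have hmax : IsGreatest {n | ∃ J, M.Indep J ∧ J ⊆ X ∧ J.ncard = n} I.ncard := by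
    refine ⟨⟨I, hI.indep, hI.subset, rfl⟩, ?_⟩
    rintro _ ⟨J, hJ, hJX, rfl⟩
    have hle := hJ.encard_le_eRk_of_subset hJX
    rw [← hI.encard_eq_eRk, ← (hX.finite_of_indep_subset hJ hJX).cast_ncard_eq,
      ← hIfin.cast_ncard_eq] at hle
    exact_mod_cast hle
  rw [rk, hmax.csSup_eq, hIfin.cast_ncard_eq, hI.encard_eq_eRk]

lemma rk_empty : rk M ∅ = 0 := by
  exact_mod_cast (cast_rk_eq_eRk (IsRkFinite.empty M)).trans M.eRk_empty

lemma rk_dual_add_rk_ground [M.Finite] (hX : X ⊆ M.E) :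
    rk M✶ X + rk M M.E = rk M (M.E \ X) + X.ncard := by
  apply Nat.cast_injective (R := ℕ∞)
  push_cast
  rw [cast_rk_eq_eRk (M✶.isRkFinite_set X), cast_rk_eq_eRk (M.isRkFinite_set _),
    cast_rk_eq_eRk (M.isRkFinite_set _), (M.ground_finite.subset hX).cast_ncard_eq, eRk_ground]
  exact M.eRk_dual_add_eRank X hX

lemma rk_dual_ground_sub_rk_dual_compl [M.Finite] (hX : X ⊆ M.E) :
    (rk M✶ M.E : ℤ) - rk M✶ (M.E \ X) = X.ncard - rk M X := by
  have hground := rk_dual_add_rk_ground (M := M) subset_rfl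
  have hcompl := rk_dual_add_rk_ground (M := M) (sdiff_subset : M.E \ X ⊆ M.E)
  rw [sdiff_self, rk_empty] at hground
  rw [sdiff_sdiff_cancel_left hX] at hcompl
  have hcard := ncard_sdiff_add_ncard_of_subset hX M.ground_finite
  omega

end Rank

section Closure

lemma coloop_iff_isColoop : Coloop M e ↔ M.IsColoop e :=
  isColoop_iff_forall_mem_isBase.symm

lemma cyclicFlat_iff :
    CyclicFlat M F ↔ M.IsFlat F ∧ ∀ e ∈ F, e ∈ M.closure (F \ {e}) := by
  refine and_congr_right fun hF => forall₂_congr fun e he => ?_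
  rw [coloop_iff_isColoop, restrict_isColoop_iff hF.subset_ground]
  simp [he]

lemma isFlat_iff_forall_notMem_closure (hF : F ⊆ M.E) :
    M.IsFlat F ↔ ∀ e ∈ M.E \ F, e ∉ M.closure F := by
  rw [isFlat_iff_closure_eq]
  refine ⟨fun h e he hcl => he.2 (h ▸ hcl), fun h => ?_⟩
  refine (subset_antisymm (fun e hcl => ?_) (M.subset_closure F hF))
  by_contra heF
  exact h e ⟨M.closure_subset_ground F hcl, heF⟩ hcl

lemma notMem_closure_iff_mem_dual_closure (hX : X ⊆ M.E) (he : e ∈ M.E \ X) :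
    e ∉ M.closure X ↔ e ∈ M✶.closure ((M.E \ X) \ {e}) := by
  have hR : insert e X ⊆ M.E := insert_subset he.1 hX
  have hcoloop := restrict_isColoop_iff (e := e) hR
  rw [insert_sdiff_self_of_notMem he.2, ← sdiff_sdiff_cancel_left hR, restrict_compl, IsColoop,
    dual_delete, contract_isLoop_iff_mem_closure] at hcoloop
  rw [Set.sdiff_sdiff, union_singleton]
  simpa [he.1] using hcoloop.symm

lemma isFlat_iff_forall_mem_dual_closure (hF : F ⊆ M.E) :
    M.IsFlat F ↔ ∀ e ∈ M.E \ F, e ∈ M✶.closure ((M.E \ F) \ {e}) := by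
  rw [isFlat_iff_forall_notMem_closure hF]
  exact forall₂_congr fun e he => notMem_closure_iff_mem_dual_closure hF he

lemma cyclicFlat_dual_iff (hZ : Z ⊆ M.E) : CyclicFlat M✶ Z ↔ CyclicFlat M (M.E \ Z) := by
  have hflat_dual := isFlat_iff_forall_mem_dual_closure (M := M✶) (F := Z) hZ
  have hflat := isFlat_iff_forall_mem_dual_closure (M := M) (F := M.E \ Z) sdiff_subset
  rw [dual_ground, dual_dual] at hflat_dual
  rw [sdiff_sdiff_cancel_left hZ] at hflat
  rw [cyclicFlat_iff, cyclicFlat_iff, hflat_dual, hflat, and_comm]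

end Closure

section CyclicCore

/-- The union of the circuits contained in `F`. -/
def cyclicCore (M : Matroid α) (F : Set α) : Set α := F \ (M ↾ F).coloops

lemma cyclicCore_subset : cyclicCore M F ⊆ F := sdiff_subset

lemma CyclicFlat.subset_cyclicCore (hZ : CyclicFlat M Z) (hZF : Z ⊆ F) (hF : F ⊆ M.E) :
    Z ⊆ cyclicCore M F := by
  refine fun e he => ⟨hZF he, fun hcoloop => ?_⟩
  rw [← isColoop_iff_mem_coloops, restrict_isColoop_iff hF] at hcoloop
  exact hcoloop.1 (M.closure_subset_closure (sdiff_subset_sdiff_left hZF)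
    ((cyclicFlat_iff.1 hZ).2 e he))

lemma isFlat_cyclicCore (hF : M.IsFlat F) : M.IsFlat (cyclicCore M F) := by
  have hFE := hF.subset_ground
  rw [isFlat_iff_forall_notMem_closure (cyclicCore_subset.trans hFE)]
  rintro e ⟨-, heC⟩ hcl
  have heF : e ∈ F := hF.closure ▸ M.closure_subset_closure cyclicCore_subset hcl
  have hcoloop : (M ↾ F).IsColoop e := by_contra fun h => heC ⟨heF, h⟩
  refine hcoloop.notMem_closure_of_notMem heC ?_
  rw [restrict_closure_eq _ cyclicCore_subset]
  exact ⟨hcl, heF⟩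

lemma cyclicFlat_cyclicCore (hF : M.IsFlat F) : CyclicFlat M (cyclicCore M F) := by
  have hFE := hF.subset_ground
  refine cyclicFlat_iff.2 ⟨isFlat_cyclicCore hF, fun e ⟨heF, heK⟩ => ?_⟩
  have hcl : e ∈ M.closure (F \ {e}) := by
    have := heK
    rwa [← isColoop_iff_mem_coloops, restrict_isColoop_iff hFE, not_and, not_imp_not,
      imp_iff_right heF] at this
  have hcl' : e ∈ (M ↾ F).closure ((F \ {e}) \ (M ↾ F).coloops) := by
    rw [closure_sdiff_eq_of_subset_coloops _ subset_rfl, restrict_closure_eq _ sdiff_subset]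
    exact ⟨⟨hcl, heF⟩, heK⟩
  rw [restrict_closure_eq _ (sdiff_subset.trans sdiff_subset), sdiff_right_comm] at hcl'
  exact hcl'.1

lemma eRk_cyclicCore_add_encard_coloops (M : Matroid α) (F : Set α) :
    M.eRk (cyclicCore M F) + (M ↾ F).coloops.encard = M.eRk F := by
  set N := M ↾ F
  obtain ⟨I, hI⟩ := N.exists_isBasis (F \ N.coloops) sdiff_subset
  have hIK : N.IsBasis (I ∪ N.coloops) F := by
    have hIK_indep : N.Indep (I ∪ N.coloops) :=
      (union_indep_iff_indep_of_subset_coloops subset_rfl).2 hI.indep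
    refine hIK_indep.isBasis_of_subset_of_subset_closure
      (union_subset (hI.subset.trans sdiff_subset) N.coloops_subset_ground) ?_
    rw [closure_union_eq_of_subset_coloops _ subset_rfl, hI.closure_eq_closure]
    exact fun e heF => (em (e ∈ N.coloops)).elim Or.inr
      fun heK => Or.inl (N.subset_closure _ sdiff_subset ⟨heF, heK⟩)
  rw [← M.restrict_eRk_eq (R := F) cyclicCore_subset, ← M.restrict_eRk_eq (R := F) subset_rfl,
    cyclicCore, ← hI.encard_eq_eRk, ← hIK.encard_eq_eRk,
    encard_union_eq (disjoint_sdiff_left.mono_left hI.subset)]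

lemma ncard_sub_rk_cyclicCore (hF : F.Finite) :
    ((cyclicCore M F).ncard : ℤ) - rk M (cyclicCore M F) = F.ncard - rk M F := by
  have hK : (M ↾ F).coloops ⊆ F := (M ↾ F).coloops_subset_ground
  have hrk : rk M (cyclicCore M F) + (M ↾ F).coloops.ncard = rk M F := by
    have h := eRk_cyclicCore_add_encard_coloops M F
    rw [← cast_rk_eq_eRk (M.isRkFinite_of_finite (hF.subset cyclicCore_subset)),
      ← cast_rk_eq_eRk (M.isRkFinite_of_finite hF), ← (hF.subset hK).cast_ncard_eq] at h
    exact_mod_cast h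
  have hcard := ncard_sdiff_add_ncard_of_subset hK hF
  rw [← cyclicCore] at hcard
  omega

end CyclicCore

section Mason

open Classical Finset

variable [Fintype α]

lemma alpha_eq (M : Matroid α) (X : Finset α) :
    alpha M X = ((X.card : ℤ) - rk M ↑X) -
      ∑ F ∈ univ.filter (fun F : Finset α => M.IsFlat ↑F ∧ F ⊂ X), alpha M F := by
  rw [alpha, sum_attach]

lemma beta_eq (M : Matroid α) (X : Finset α) :
    beta M X = (rk M M.E : ℤ) - rk M ↑X -
      ∑ Y ∈ univ.filter (fun Y : Finset α => CyclicFlat M ↑Y ∧ X ⊂ Y), beta M Y := by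
  rw [beta, sum_attach]

lemma alpha_eq_sub_sum_cyclicFlat_of {X : Finset α}
    (hvanish : ∀ F ⊂ X, M.IsFlat ↑F → ¬ CyclicFlat M ↑F → alpha M F = 0) :
    alpha M X = ((X.card : ℤ) - rk M ↑X) -
      ∑ Z ∈ univ.filter (fun Z : Finset α => CyclicFlat M ↑Z ∧ Z ⊂ X), alpha M Z := by
  rw [alpha_eq]
  congr 1
  refine (sum_subset (monotone_filter_right _ fun Z _ hZ => ⟨hZ.1.1, hZ.2⟩) ?_).symm
  simp only [mem_filter, Finset.mem_univ, true_and]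
  exact fun F ⟨hF, hFX⟩ hnc => hvanish F hFX hF fun hc => hnc ⟨hc, hFX⟩

lemma alpha_eq_zero_of_not_cyclicFlat {F : Finset α} (hF : M.IsFlat ↑F)
    (hnc : ¬ CyclicFlat M ↑F) : alpha M F = 0 := by
  induction F using Finset.strongInduction with
  | H F ih =>
  obtain ⟨C, hC⟩ := (toFinite (cyclicCore M ↑F)).exists_finset_coe
  have hCcyc : CyclicFlat M ↑C := hC ▸ cyclicFlat_cyclicCore hF
  have hCF : C ⊂ F := by
    rw [← Finset.coe_ssubset, hC]
    exact cyclicCore_subset.ssubset_of_ne fun h => hnc (h ▸ cyclicFlat_cyclicCore hF)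
  have hbelow : univ.filter (fun Z : Finset α => CyclicFlat M ↑Z ∧ Z ⊂ F) =
      insert C (univ.filter (fun Z : Finset α => CyclicFlat M ↑Z ∧ Z ⊂ C)) := by
    ext Z
    simp only [mem_filter, Finset.mem_univ, true_and, Finset.mem_insert]
    constructor
    · rintro ⟨hZ, hZF⟩
      have hZC : Z ⊆ C := by
        rw [← Finset.coe_subset, hC]
        exact hZ.subset_cyclicCore (Finset.coe_subset.2 hZF.subset) hF.subset_ground
      exact hZC.eq_or_ssubset.imp id (⟨hZ, ·⟩)
    · rintro (rfl | ⟨hZ, hZC⟩)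
      exacts [⟨hCcyc, hCF⟩, ⟨hZ, hZC.trans hCF⟩]
  have hnullity := ncard_sub_rk_cyclicCore (M := M) (toFinite (F : Set α))
  rw [← hC, ncard_coe_finset, ncard_coe_finset] at hnullity
  rw [alpha_eq_sub_sum_cyclicFlat_of ih, hbelow, sum_insert (by simp),
    alpha_eq_sub_sum_cyclicFlat_of fun G hGC => ih G (hGC.trans hCF)]
  linarith

lemma alpha_eq_sub_sum_cyclicFlat (M : Matroid α) (X : Finset α) :
    alpha M X = ((X.card : ℤ) - rk M ↑X) -
      ∑ Z ∈ univ.filter (fun Z : Finset α => CyclicFlat M ↑Z ∧ Z ⊂ X), alpha M Z :=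
  alpha_eq_sub_sum_cyclicFlat_of fun _ _ => alpha_eq_zero_of_not_cyclicFlat

lemma sum_cyclicFlat_ssubset_eq_sum_dual {β : Type*} [AddCommMonoid β] (f : Finset α → β)
    {X : Finset α} (hX : ↑X ⊆ M.E) :
    ∑ Z ∈ univ.filter (fun Z : Finset α => CyclicFlat M ↑Z ∧ Z ⊂ X), f (M.E.toFinset \ Z) =
      ∑ Y ∈ univ.filter (fun Y : Finset α => CyclicFlat M✶ ↑Y ∧ M.E.toFinset \ X ⊂ Y), f Y := by
  set E := M.E.toFinset
  have hground {Z : Finset α} : Z ⊆ E ↔ ↑Z ⊆ M.E := by rw [← Finset.coe_subset, coe_toFinset]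
  have hdual {Z : Finset α} (hZ : Z ⊆ E) : CyclicFlat M✶ ↑(E \ Z) ↔ CyclicFlat M ↑Z := by
    rw [Finset.coe_sdiff, coe_toFinset, cyclicFlat_dual_iff sdiff_subset,
      sdiff_sdiff_cancel_left (hground.1 hZ)]
  have hXE : X ⊆ E := hground.2 hX
  have hZE {Z : Finset α} (hZ : CyclicFlat M ↑Z) : Z ⊆ E := hground.2 hZ.1.subset_ground
  have hYE {Y : Finset α} (hY : CyclicFlat M✶ ↑Y) : Y ⊆ E := hground.2 hY.1.subset_ground
  refine sum_nbij' (E \ ·) (E \ ·) ?_ ?_ ?_ ?_ fun _ _ => rfl <;>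
    simp only [mem_filter, Finset.mem_univ, true_and]
  · exact fun Z ⟨hZ, hZX⟩ => ⟨(hdual (hZE hZ)).2 hZ, (sdiff_lt_sdiff_iff hXE (hZE hZ)).2 hZX⟩
  · intro Y ⟨hY, hXY⟩
    have hYY : E \ (E \ Y) = Y := Finset.sdiff_sdiff_eq_self (hYE hY)
    rw [← hYY] at hY hXY
    exact ⟨(hdual sdiff_subset).1 hY, (sdiff_lt_sdiff_iff hXE Finset.sdiff_subset).1 hXY⟩
  · exact fun Z ⟨hZ, _⟩ => Finset.sdiff_sdiff_eq_self (hZE hZ)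
  · exact fun Y ⟨hY, _⟩ => Finset.sdiff_sdiff_eq_self (hYE hY)

end Mason

end MCoPaper

open MCoPaper

open Classical in
theorem stmt15 [Fintype α] (M : Matroid α) (X : Finset α) (hX : ↑X ⊆ M.E) :
    alpha M X = beta M✶ (M.E.toFinset \ X) := by
  induction X using Finset.strongInduction with
  | H X ih =>
  have hrk : (rk M✶ M✶.E : ℤ) - rk M✶ ↑(M.E.toFinset \ X) = X.card - rk M ↑X := by
    rw [Finset.coe_sdiff, coe_toFinset, dual_ground, rk_dual_ground_sub_rk_dual_compl hX,
      ncard_coe_finset]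
  rw [alpha_eq_sub_sum_cyclicFlat, beta_eq, hrk, ← sum_cyclicFlat_ssubset_eq_sum_dual _ hX]
  congr 1
  refine Finset.sum_congr rfl fun Z hZ => ?_
  obtain ⟨-, hZ, hZX⟩ := Finset.mem_filter.1 hZ
  exact ih Z hZX hZ.1.subset_ground
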